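/- arXiv:1511.07783 — 13 statements merged into one kernel-verified Lean document; each statement's English description precedes it below -/
import Mathlib

section
/- Let M be a Γ-semigroup. The following are equivalent: (1) M is left regular and xΓM ⊆ MΓx for every x ∈ M; (2) for every x ∈ M, N(x) = {y ∈ M | x ∈ MΓy}; (3) 𝒩 = ℒ; (4) for every left ideal L of M, L = ⋃_{x ∈ L} (x)_𝒩; (5) (x)_𝒩 is a left simple subsemigroup of M for every x ∈ M; (6) there exists a semilattice congruence σ on M such that (x)_σ is a left simple subsemigroup of M for every x ∈ M; (7) every left ideal of M is semiprime and is also a right ideal of M. -/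
namespace GammaSemigroup

variable {M G : Type*}

/-- The set product AΓB = {aγb | a ∈ A, γ ∈ Γ, b ∈ B}. -/
def sprod (mul : M → G → M → M) (A B : Set M) : Set M :=
  {c | ∃ a ∈ A, ∃ g : G, ∃ b ∈ B, c = mul a g b}

/-- A nonempty subset A with MΓA ⊆ A. -/
def IsLeftIdeal (mul : M → G → M → M) (A : Set M) : Prop :=
  A.Nonempty ∧ sprod mul Set.univ A ⊆ A

/-- A nonempty subset A with AΓM ⊆ A. -/
def IsRightIdeal (mul : M → G → M → M) (A : Set M) : Prop :=
  A.Nonempty ∧ sprod mul A Set.univ ⊆ A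

/-- An ideal: both a left and a right ideal. -/
def IsIdeal (mul : M → G → M → M) (A : Set M) : Prop :=
  IsLeftIdeal mul A ∧ IsRightIdeal mul A

/-- A nonempty subset A with AΓA ⊆ A. -/
def IsSubsemigroup (mul : M → G → M → M) (A : Set M) : Prop :=
  A.Nonempty ∧ sprod mul A A ⊆ A

/-- A filter: a subsemigroup F such that aγb ∈ F implies a ∈ F and b ∈ F. -/
def IsFilter (mul : M → G → M → M) (F : Set M) : Prop :=
  IsSubsemigroup mul F ∧ ∀ a b : M, ∀ g : G, mul a g b ∈ F → a ∈ F ∧ b ∈ F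

/-- N(x): the filter of M generated by x (intersection of all filters containing x). -/
def filN (mul : M → G → M → M) (x : M) : Set M :=
  ⋂₀ {F : Set M | IsFilter mul F ∧ x ∈ F}

/-- L(a) = {a} ∪ MΓa. -/
def Lgen (mul : M → G → M → M) (a : M) : Set M :=
  {a} ∪ sprod mul Set.univ {a}

/-- R(a) = {a} ∪ aΓM. -/
def Rgen (mul : M → G → M → M) (a : M) : Set M :=
  {a} ∪ sprod mul {a} Set.univ

/-- I(a) = {a} ∪ MΓa ∪ aΓM ∪ MΓaΓM. -/
def Igen (mul : M → G → M → M) (a : M) : Set M :=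
  {a} ∪ sprod mul Set.univ {a} ∪ sprod mul {a} Set.univ ∪
    sprod mul (sprod mul Set.univ {a}) Set.univ

/-- The 𝒩-class of x. -/
def NClass (mul : M → G → M → M) (x : M) : Set M :=
  {y | filN mul y = filN mul x}

/-- A congruence: an equivalence relation compatible with the multiplication on both sides. -/
def IsCongruence (mul : M → G → M → M) (σ : M → M → Prop) : Prop :=
  Equivalence σ ∧
    ∀ a b c : M, ∀ g : G, σ a b → σ (mul c g a) (mul c g b) ∧ σ (mul a g c) (mul b g c)

/-- A semilattice congruence. -/
def IsSemilatticeCongruence (mul : M → G → M → M) (σ : M → M → Prop) : Prop :=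
  IsCongruence mul σ ∧ (∀ a b : M, ∀ g : G, σ (mul a g b) (mul b g a)) ∧
    ∀ a : M, ∀ g : G, σ (mul a g a) a

/-- The σ-class of x. -/
def sigmaClass (σ : M → M → Prop) (x : M) : Set M := {y | σ y x}

/-- A left ideal of the subsemigroup T: a nonempty A ⊆ T with TΓA ⊆ A. -/
def IsLeftIdealOf (mul : M → G → M → M) (T A : Set M) : Prop :=
  A.Nonempty ∧ A ⊆ T ∧ sprod mul T A ⊆ A

/-- A right ideal of the subsemigroup T: a nonempty A ⊆ T with AΓT ⊆ A. -/
def IsRightIdealOf (mul : M → G → M → M) (T A : Set M) : Prop :=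
  A.Nonempty ∧ A ⊆ T ∧ sprod mul A T ⊆ A

/-- T is a left simple subsemigroup: its only left ideal is T itself. -/
def IsLeftSimple (mul : M → G → M → M) (T : Set M) : Prop :=
  IsSubsemigroup mul T ∧ ∀ A : Set M, IsLeftIdealOf mul T A → A = T

/-- T is a right simple subsemigroup: its only right ideal is T itself. -/
def IsRightSimple (mul : M → G → M → M) (T : Set M) : Prop :=
  IsSubsemigroup mul T ∧ ∀ A : Set M, IsRightIdealOf mul T A → A = T

/-- T is a simple subsemigroup: both left simple and right simple. -/
def IsSimple (mul : M → G → M → M) (T : Set M) : Prop :=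
  IsLeftSimple mul T ∧ IsRightSimple mul T

/-- A is semiprime: aγa ∈ A implies a ∈ A. -/
def IsSemiprime (mul : M → G → M → M) (A : Set M) : Prop :=
  ∀ a : M, ∀ g : G, mul a g a ∈ A → a ∈ A

/-- Intra-regular: x ∈ MΓ(xγx)ΓM for all x, γ. -/
def IsIntraRegular (mul : M → G → M → M) : Prop :=
  ∀ x : M, ∀ g : G, x ∈ sprod mul (sprod mul Set.univ {mul x g x}) Set.univ

/-- Left regular: x ∈ MΓ(xγx) for all x, γ. -/
def IsLeftRegular (mul : M → G → M → M) : Prop :=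
  ∀ x : M, ∀ g : G, x ∈ sprod mul Set.univ {mul x g x}

/-- Right regular: x ∈ (xγx)ΓM for all x, γ. -/
def IsRightRegular (mul : M → G → M → M) : Prop :=
  ∀ x : M, ∀ g : G, x ∈ sprod mul {mul x g x} Set.univ


namespace LRAux

variable {M G : Type*} {mul : M → G → M → M}

/-- x ∈ MΓy, as a bare existential. -/
def InL (mul : M → G → M → M) (x y : M) : Prop := ∃ m : M, ∃ g : G, x = mul m g y

lemma mem_ug {x y : M} : x ∈ sprod mul Set.univ {y} ↔ InL mul x y := by
  constructor
  · rintro ⟨a, -, g, b, hb, rfl⟩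
    rw [Set.mem_singleton_iff] at hb
    exact ⟨a, g, by rw [hb]⟩
  · rintro ⟨m, g, rfl⟩; exact ⟨m, trivial, g, y, rfl, rfl⟩

lemma mem_gu {x y : M} : x ∈ sprod mul {y} Set.univ ↔ ∃ g : G, ∃ m : M, x = mul y g m := by
  constructor
  · rintro ⟨a, ha, g, b, -, rfl⟩
    rw [Set.mem_singleton_iff] at ha
    exact ⟨g, b, by rw [ha]⟩
  · rintro ⟨g, m, rfl⟩; exact ⟨y, rfl, g, m, trivial, rfl⟩

lemma mem_Lgen {z a : M} : z ∈ Lgen mul a ↔ z = a ∨ InL mul z a := by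
  rw [Lgen, Set.mem_union, Set.mem_singleton_iff, mem_ug]

/-- Repackaged left regularity. -/
lemma hlr' (hlr : IsLeftRegular mul) (x : M) (g : G) : InL mul x (mul x g x) :=
  mem_ug.1 (hlr x g)

/-- Repackaged xΓM ⊆ MΓx. -/
lemma hcm' (hcm : ∀ x : M, sprod mul {x} Set.univ ⊆ sprod mul Set.univ {x})
    (x : M) (g : G) (m : M) : InL mul (mul x g m) x :=
  mem_ug.1 (hcm x (mem_gu.2 ⟨g, m, rfl⟩))

/- ### Filter lemmas (no associativity needed) -/

lemma filter_mul_mem {F : Set M} (hF : IsFilter mul F) {a b : M} (g : G)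
    (ha : a ∈ F) (hb : b ∈ F) : mul a g b ∈ F :=
  hF.1.2 ⟨a, ha, g, b, hb, rfl⟩

lemma mem_filN_self (x : M) : x ∈ filN mul x :=
  Set.mem_sInter.2 fun _ hF => hF.2

lemma filN_subset {F : Set M} (hF : IsFilter mul F) {x : M} (hx : x ∈ F) :
    filN mul x ⊆ F := fun _ hy => Set.mem_sInter.1 hy F ⟨hF, hx⟩

lemma mem_filN_of_InL {x y : M} (h : InL mul x y) : y ∈ filN mul x := by
  refine Set.mem_sInter.2 ?_
  rintro F ⟨hF, hxF⟩
  obtain ⟨m, g, hx⟩ := h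
  exact (hF.2 m y g (hx ▸ hxF)).2

lemma filN_congr {u v : M} (h : ∀ F : Set M, IsFilter mul F → (u ∈ F ↔ v ∈ F)) :
    filN mul u = filN mul v := by
  have hset : {F : Set M | IsFilter mul F ∧ u ∈ F} = {F : Set M | IsFilter mul F ∧ v ∈ F} := by
    ext F
    exact ⟨fun ⟨hF, hu⟩ => ⟨hF, (h F hF).1 hu⟩, fun ⟨hF, hv⟩ => ⟨hF, (h F hF).2 hv⟩⟩
  rw [filN, filN, hset]

lemma mem_filN_of_filN_eq {a b : M} {F : Set M} (hF : IsFilter mul F)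
    (hab : filN mul a = filN mul b) (ha : a ∈ F) : b ∈ F :=
  filN_subset hF ha (by rw [hab]; exact mem_filN_self b)

section assoc
variable (hassoc : ∀ a b c : M, ∀ g d : G, mul (mul a g b) d c = mul a g (mul b d c))
include hassoc

lemma InL_trans {x y z : M} (h1 : InL mul x y) (h2 : InL mul y z) : InL mul x z := by
  obtain ⟨m, g, rfl⟩ := h1
  obtain ⟨n, d, rfl⟩ := h2
  exact ⟨mul m g n, d, (hassoc m n z g d).symm⟩

/-- x ∈ MΓx under left regularity. -/
lemma self_InL [Nonempty G] (hlr : IsLeftRegular mul) (x : M) : InL mul x x := by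
  obtain ⟨m, d, h⟩ := hlr' hlr x (Classical.arbitrary G)
  exact ⟨mul m d x, Classical.arbitrary G, by rw [hassoc]; exact h⟩

/-- If x ∈ MΓz then for every γ there is p with x = pγz. -/
lemma anyGamma (hlr : IsLeftRegular mul) {x z : M} (h : InL mul x z) (g : G) :
    ∃ p : M, x = mul p g z := by
  obtain ⟨b, β, rfl⟩ := h
  obtain ⟨n, ε, hz⟩ := hlr' hlr z g
  refine ⟨mul (mul b β n) ε z, ?_⟩
  rw [hassoc, hassoc]
  conv_lhs => rw [hz]

/-- Key lemma: x ∈ MΓy and x ∈ MΓz imply x ∈ MΓ(yγz) for every γ. -/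
lemma InL_mul (hlr : IsLeftRegular mul)
    (hcm : ∀ x : M, sprod mul {x} Set.univ ⊆ sprod mul Set.univ {x})
    {x y z : M} (hy : InL mul x y) (hz : InL mul x z) (g : G) :
    InL mul x (mul y g z) := by
  obtain ⟨p, hp⟩ := anyGamma hassoc hlr hz g
  obtain ⟨a, α, ha⟩ := hy
  obtain ⟨m, ε, hm⟩ := hlr' hlr x g
  obtain ⟨c, δ, hc⟩ := hcm' hcm y g p
  refine ⟨mul m ε (mul a α c), δ, ?_⟩
  have key : mul x g x = mul a α (mul c δ (mul y g z)) := by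
    nth_rewrite 1 [ha]
    nth_rewrite 1 [hp]
    rw [hassoc, ← hassoc y p z g g, hc, hassoc]
  rw [hassoc, hassoc, ← key, ← hm]

/- ### The implications -/

lemma one_two [Nonempty G]
    (h1 : IsLeftRegular mul ∧ ∀ x : M, sprod mul {x} Set.univ ⊆ sprod mul Set.univ {x}) :
    ∀ x : M, filN mul x = {y : M | x ∈ sprod mul Set.univ {y}} := by
  obtain ⟨hlr, hcm⟩ := h1
  intro x
  apply Set.Subset.antisymm
  · have hfil : IsFilter mul {y : M | x ∈ sprod mul Set.univ {y}} := by
      refine ⟨⟨⟨x, mem_ug.2 (self_InL hassoc hlr x)⟩, ?_⟩, ?_⟩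
      · rintro c ⟨a, ha, g, b, hb, rfl⟩
        exact mem_ug.2 (InL_mul hassoc hlr hcm (mem_ug.1 ha) (mem_ug.1 hb) g)
      · rintro a b g hab
        obtain ⟨m, δ, hx⟩ := mem_ug.1 hab
        constructor
        · obtain ⟨c, ε, hc⟩ := hcm' hcm a g b
          exact mem_ug.2 (InL_trans hassoc ⟨m, δ, hx⟩ ⟨c, ε, hc⟩)
        · exact mem_ug.2 ⟨mul m δ a, g, by rw [hx, hassoc]⟩
    exact filN_subset hfil (mem_ug.2 (self_InL hassoc hlr x))
  · intro y hy
    exact mem_filN_of_InL (mem_ug.1 hy)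

lemma two_three
    (h2 : ∀ x : M, filN mul x = {y : M | x ∈ sprod mul Set.univ {y}}) :
    ∀ a b : M, filN mul a = filN mul b ↔ Lgen mul a = Lgen mul b := by
  have hIn : ∀ a b : M, filN mul a = filN mul b → InL mul a b := by
    intro a b h
    have hb : b ∈ filN mul a := by rw [h]; exact mem_filN_self b
    rw [h2 a] at hb
    exact mem_ug.1 hb
  intro a b
  constructor
  · intro h
    have hab := hIn a b h
    have hba := hIn b a h.symm
    ext z
    rw [mem_Lgen, mem_Lgen]
    constructor
    · rintro (rfl | hz)
      · exact Or.inr hab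
      · exact Or.inr (InL_trans hassoc hz hab)
    · rintro (rfl | hz)
      · exact Or.inr hba
      · exact Or.inr (InL_trans hassoc hz hba)
  · intro h
    rw [h2 a, h2 b]
    have hb : b = a ∨ InL mul b a := mem_Lgen.1 (h ▸ mem_Lgen.2 (Or.inl rfl))
    have ha : a = b ∨ InL mul a b := mem_Lgen.1 (h ▸ mem_Lgen.2 (Or.inl rfl))
    ext y
    simp only [Set.mem_setOf_eq, mem_ug]
    constructor
    · intro hy
      rcases hb with rfl | hba
      · exact hy
      · exact InL_trans hassoc hba hy
    · intro hy
      rcases ha with rfl | hab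
      · exact hy
      · exact InL_trans hassoc hab hy

lemma three_one
    (h3 : ∀ a b : M, filN mul a = filN mul b ↔ Lgen mul a = Lgen mul b) :
    IsLeftRegular mul ∧ ∀ x : M, sprod mul {x} Set.univ ⊆ sprod mul Set.univ {x} := by
  constructor
  · intro x g
    have hN : filN mul x = filN mul (mul x g x) :=
      filN_congr fun F hF =>
        ⟨fun h => filter_mul_mem hF g h h, fun h => (hF.2 x x g h).1⟩
    have hL := (h3 x (mul x g x)).1 hN
    have hx : x ∈ Lgen mul (mul x g x) := hL ▸ mem_Lgen.2 (Or.inl rfl)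
    rcases mem_Lgen.1 hx with hx1 | hx2
    · exact mem_ug.2 ⟨x, g, by rw [← hx1]; exact hx1⟩
    · exact mem_ug.2 hx2
  · intro x s hs
    obtain ⟨g, m, rfl⟩ := mem_gu.1 hs
    have hN : filN mul (mul x g m) = filN mul (mul (mul x g m) g x) :=
      filN_congr fun F hF =>
        ⟨fun h => filter_mul_mem hF g h ((hF.2 x m g h).1), fun h => (hF.2 _ _ _ h).1⟩
    have hL := (h3 _ _).1 hN
    have hx : mul x g m ∈ Lgen mul (mul (mul x g m) g x) := hL ▸ mem_Lgen.2 (Or.inl rfl)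
    rcases mem_Lgen.1 hx with hx1 | ⟨m', δ, h'⟩
    · exact mem_ug.2 ⟨mul x g m, g, hx1⟩
    · exact mem_ug.2 ⟨mul m' δ (mul x g m), g, by rw [hassoc]; exact h'⟩

omit hassoc in
lemma two_four
    (h2 : ∀ x : M, filN mul x = {y : M | x ∈ sprod mul Set.univ {y}}) :
    ∀ L : Set M, IsLeftIdeal mul L → L = ⋃ x ∈ L, NClass mul x := by
  intro L hL
  apply Set.Subset.antisymm
  · intro x hx
    exact Set.mem_biUnion hx (show x ∈ NClass mul x from rfl)
  · intro y hy
    simp only [Set.mem_iUnion, exists_prop] at hy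
    obtain ⟨x, hxL, hyx⟩ := hy
    have hx : x ∈ filN mul y := by
      rw [show filN mul y = filN mul x from hyx]
      exact mem_filN_self x
    rw [h2 y] at hx
    obtain ⟨m, g, hy'⟩ := mem_ug.1 hx
    exact hL.2 ⟨m, trivial, g, x, hxL, hy'⟩

omit hassoc in
lemma four_seven
    (h4 : ∀ L : Set M, IsLeftIdeal mul L → L = ⋃ x ∈ L, NClass mul x) :
    ∀ L : Set M, IsLeftIdeal mul L → IsSemiprime mul L ∧ IsRightIdeal mul L := by
  intro L hL
  have hrw := h4 L hL
  constructor
  · intro a g ha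
    have hN : filN mul a = filN mul (mul a g a) :=
      filN_congr fun F hF =>
        ⟨fun h => filter_mul_mem hF g h h, fun h => (hF.2 a a g h).1⟩
    rw [hrw] at ha ⊢
    exact Set.mem_biUnion (hrw ▸ (h4 L hL ▸ ha)) hN
  · refine ⟨hL.1, ?_⟩
    rintro c ⟨a, haL, g, m, -, rfl⟩
    have hmem : mul (mul a g m) g a ∈ L := hL.2 ⟨mul a g m, trivial, g, a, haL, rfl⟩
    have hN : filN mul (mul a g m) = filN mul (mul (mul a g m) g a) :=
      filN_congr fun F hF =>
        ⟨fun h => filter_mul_mem hF g h ((hF.2 a m g h).1), fun h => (hF.2 _ _ _ h).1⟩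
    rw [hrw]
    exact Set.mem_biUnion hmem hN

lemma seven_one [Nonempty G]
    (h7 : ∀ L : Set M, IsLeftIdeal mul L → IsSemiprime mul L ∧ IsRightIdeal mul L) :
    IsLeftRegular mul ∧ ∀ x : M, sprod mul {x} Set.univ ⊆ sprod mul Set.univ {x} := by
  have hli : ∀ y : M, IsLeftIdeal mul (sprod mul Set.univ {y}) := by
    intro y
    constructor
    · exact ⟨mul y (Classical.arbitrary G) y, mem_ug.2 ⟨y, Classical.arbitrary G, rfl⟩⟩
    · rintro c ⟨a, -, g, b, hb, rfl⟩
      obtain ⟨n, d, hn⟩ := mem_ug.1 hb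
      exact mem_ug.2 ⟨mul a g n, d, by rw [hn, hassoc]⟩
  have hlreg : IsLeftRegular mul := by
    intro x g
    have h := h7 _ (hli (mul x g x))
    have h1 : mul x g x ∈ sprod mul Set.univ {mul x g x} :=
      h.1 (mul x g x) g (mem_ug.2 ⟨mul x g x, g, rfl⟩)
    exact h.1 x g h1
  refine ⟨hlreg, ?_⟩
  intro x s hs
  obtain ⟨g, m, rfl⟩ := mem_gu.1 hs
  have h := h7 _ (hli x)
  have hx : x ∈ sprod mul Set.univ {x} := by
    obtain ⟨p, d, hp⟩ := hlr' hlreg x (Classical.arbitrary G)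
    exact mem_ug.2 ⟨mul p d x, Classical.arbitrary G, by rw [hassoc]; exact hp⟩
  exact h.2.2 ⟨x, hx, g, m, trivial, rfl⟩

lemma one_five [Nonempty G]
    (h1 : IsLeftRegular mul ∧ ∀ x : M, sprod mul {x} Set.univ ⊆ sprod mul Set.univ {x}) :
    ∀ x : M, IsLeftSimple mul (NClass mul x) := by
  obtain ⟨hlr, hcm⟩ := h1
  have h2 := one_two hassoc ⟨hlr, hcm⟩
  have hclass : ∀ x y : M, filN mul y = filN mul x ↔ (∀ v, InL mul y v ↔ InL mul x v) := by
    intro x y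
    rw [h2 x, h2 y]
    constructor
    · intro h v
      exact ⟨fun hv => mem_ug.1 ((Set.ext_iff.1 h v).1 (mem_ug.2 hv)),
        fun hv => mem_ug.1 ((Set.ext_iff.1 h v).2 (mem_ug.2 hv))⟩
    · intro h
      ext v
      exact ⟨fun hv => mem_ug.2 ((h v).1 (mem_ug.1 hv)),
        fun hv => mem_ug.2 ((h v).2 (mem_ug.1 hv))⟩
  intro x
  constructor
  · refine ⟨⟨x, rfl⟩, ?_⟩
    rintro c ⟨y, hy, g, z, hz, rfl⟩
    have Hy := (hclass x y).1 hy
    have Hz := (hclass x z).1 hz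
    have hxy : InL mul x y := (Hy y).1 (self_InL hassoc hlr y)
    have hxz : InL mul x z := (Hz z).1 (self_InL hassoc hlr z)
    refine (hclass x _).2 fun v => ⟨fun hv => ?_, fun hv => ?_⟩
    · exact InL_trans hassoc (InL_mul hassoc hlr hcm hxy hxz g) hv
    · exact InL_trans hassoc (hcm' hcm y g z) ((Hy v).2 hv)
  · rintro A ⟨⟨a, haA⟩, hAsub, hAcl⟩
    apply Set.Subset.antisymm hAsub
    intro t ht
    have haC : a ∈ NClass mul x := hAsub haA
    have Ht := (hclass x t).1 ht
    have Ha := (hclass x a).1 haC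
    set γ := Classical.arbitrary G with hγ
    have hta : InL mul t a := (Ht a).2 ((Ha a).1 (self_InL hassoc hlr a))
    have hsA : mul t γ a ∈ A := hAcl ⟨t, ht, γ, a, haA, rfl⟩
    have hts : InL mul t (mul t γ a) := InL_mul hassoc hlr hcm (self_InL hassoc hlr t) hta γ
    obtain ⟨m, δ, hm⟩ := InL_mul hassoc hlr hcm (self_InL hassoc hlr t) hts γ
    have ht2 : t = mul (mul m δ t) γ (mul t γ a) := by rw [hassoc]; exact hm
    have hw : mul m δ t ∈ NClass mul x := by
      refine (hclass x _).2 fun v => ⟨fun hv => ?_, fun hv => ?_⟩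
      · have htw : InL mul t (mul m δ t) := by
          have h0 := hcm' hcm (mul m δ t) γ (mul t γ a)
          rw [← ht2] at h0
          exact h0
        exact (Ht v).1 (InL_trans hassoc htw hv)
      · exact InL_trans hassoc ⟨m, δ, rfl⟩ ((Ht v).2 hv)
    rw [ht2]
    exact hAcl ⟨mul m δ t, hw, γ, mul t γ a, hsA, rfl⟩

omit hassoc in
lemma five_six (h5 : ∀ x : M, IsLeftSimple mul (NClass mul x)) :
    ∃ σ : M → M → Prop, IsSemilatticeCongruence mul σ ∧
      ∀ x : M, IsLeftSimple mul (sigmaClass σ x) := by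
  refine ⟨fun a b => filN mul a = filN mul b,
    ⟨⟨⟨fun _ => rfl, fun h => h.symm, fun h h' => h.trans h'⟩, ?_⟩, ?_, ?_⟩,
    fun x => h5 x⟩
  · intro a b c g hab
    constructor
    · exact filN_congr fun F hF =>
        ⟨fun h => filter_mul_mem hF g (hF.2 c a g h).1
            (mem_filN_of_filN_eq hF hab (hF.2 c a g h).2),
          fun h => filter_mul_mem hF g (hF.2 c b g h).1
            (mem_filN_of_filN_eq hF hab.symm (hF.2 c b g h).2)⟩
    · exact filN_congr fun F hF =>
        ⟨fun h => filter_mul_mem hF g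
            (mem_filN_of_filN_eq hF hab (hF.2 a c g h).1) (hF.2 a c g h).2,
          fun h => filter_mul_mem hF g
            (mem_filN_of_filN_eq hF hab.symm (hF.2 b c g h).1) (hF.2 b c g h).2⟩
  · intro a b g
    exact filN_congr fun F hF =>
      ⟨fun h => filter_mul_mem hF g (hF.2 a b g h).2 (hF.2 a b g h).1,
        fun h => filter_mul_mem hF g (hF.2 b a g h).2 (hF.2 b a g h).1⟩
  · intro a g
    exact filN_congr fun F hF =>
      ⟨fun h => (hF.2 a a g h).1, fun h => filter_mul_mem hF g h h⟩

lemma six_one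
    (h6 : ∃ σ : M → M → Prop, IsSemilatticeCongruence mul σ ∧
      ∀ x : M, IsLeftSimple mul (sigmaClass σ x)) :
    IsLeftRegular mul ∧ ∀ x : M, sprod mul {x} Set.univ ⊆ sprod mul Set.univ {x} := by
  obtain ⟨σ, ⟨⟨⟨hrefl, hsymm, htrans⟩, hcong⟩, hcomm, hidem⟩, hcls⟩ := h6
  constructor
  · intro x g
    have hxx : σ (mul x g x) x := hidem x g
    have hsub : ∀ c, σ c x → ∀ d : G, σ (mul c d (mul x g x)) x := by
      intro c hc d
      exact htrans (hcong c x (mul x g x) d hc).2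
        (htrans ((hcong (mul x g x) x x d hxx).1) (hidem x d))
    have hAC : ({mul x g x} : Set M) ∪ sprod mul (sigmaClass σ x) {mul x g x}
        = sigmaClass σ x := by
      apply (hcls x).2
      refine ⟨⟨mul x g x, Or.inl rfl⟩, ?_, ?_⟩
      · rintro y (rfl | hy)
        · exact hxx
        · obtain ⟨c, hc, d, b, hb, rfl⟩ := hy
          rw [Set.mem_singleton_iff] at hb; subst hb
          exact hsub c hc d
      · rintro y ⟨c, hc, d, b, hb, rfl⟩
        rcases hb with rfl | hb
        · exact Or.inr ⟨c, hc, d, mul x g x, rfl, rfl⟩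
        · obtain ⟨c', hc', d', b', hb', rfl⟩ := hb
          rw [Set.mem_singleton_iff] at hb'; subst hb'
          refine Or.inr ⟨mul c d c', ?_, d', mul x g x, rfl,
            (hassoc c c' (mul x g x) d d').symm⟩
          exact htrans (hcong c x c' d hc).2
            (htrans ((hcong c' x x d hc').1) (hidem x d))
    have hxA : x ∈ ({mul x g x} : Set M) ∪ sprod mul (sigmaClass σ x) {mul x g x} := by
      rw [hAC]; exact hrefl x
    rcases hxA with hx1 | hx2
    · rw [Set.mem_singleton_iff] at hx1
      exact mem_ug.2 ⟨x, g, by rw [← hx1]; exact hx1⟩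
    · obtain ⟨c, hc, d, b, hb, hx⟩ := hx2
      exact ⟨c, trivial, d, b, hb, hx⟩
  · intro x s hs
    obtain ⟨g, m, rfl⟩ := mem_gu.1 hs
    have hAC : sigmaClass σ (mul x g m) ∩ sprod mul Set.univ {x}
        = sigmaClass σ (mul x g m) := by
      apply (hcls (mul x g m)).2
      refine ⟨⟨mul m g x, ⟨hcomm m x g, mem_ug.2 ⟨m, g, rfl⟩⟩⟩,
        Set.inter_subset_left, ?_⟩
      rintro y ⟨c, hc, d, b, ⟨hbC, hbx⟩, rfl⟩
      constructor
      · exact htrans (hcong c (mul x g m) b d hc).2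
          (htrans ((hcong b (mul x g m) (mul x g m) d hbC).1) (hidem _ d))
      · obtain ⟨n, e, hn⟩ := mem_ug.1 hbx
        exact mem_ug.2 ⟨mul c d n, e, by rw [hn, hassoc]⟩
    have hmem : mul x g m ∈ sigmaClass σ (mul x g m) ∩ sprod mul Set.univ {x} := by
      rw [hAC]; exact hrefl _
    exact hmem.2

end assoc
end LRAux

end GammaSemigroup

open GammaSemigroup

/-- Theorem 6: characterizations of left regular Γ-semigroups with xΓM ⊆ MΓx. -/
theorem left_regular_tfae {M G : Type*} [Nonempty M] [Nonempty G]
    (mul : M → G → M → M)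
    (hassoc : ∀ a b c : M, ∀ g d : G, mul (mul a g b) d c = mul a g (mul b d c)) :
    [ IsLeftRegular mul ∧ ∀ x : M, sprod mul {x} Set.univ ⊆ sprod mul Set.univ {x},
      ∀ x : M, filN mul x = {y : M | x ∈ sprod mul Set.univ {y}},
      ∀ a b : M, filN mul a = filN mul b ↔ Lgen mul a = Lgen mul b,
      ∀ L : Set M, IsLeftIdeal mul L → L = ⋃ x ∈ L, NClass mul x,
      ∀ x : M, IsLeftSimple mul (NClass mul x),
      ∃ σ : M → M → Prop, IsSemilatticeCongruence mul σ ∧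
        ∀ x : M, IsLeftSimple mul (sigmaClass σ x),
      ∀ L : Set M, IsLeftIdeal mul L → IsSemiprime mul L ∧ IsRightIdeal mul L ].TFAE := by
  tfae_have 1 → 2 := LRAux.one_two hassoc
  tfae_have 2 → 3 := LRAux.two_three hassoc
  tfae_have 3 → 1 := LRAux.three_one hassoc
  tfae_have 2 → 4 := LRAux.two_four
  tfae_have 4 → 7 := LRAux.four_seven
  tfae_have 7 → 1 := LRAux.seven_one hassoc
  tfae_have 1 → 5 := LRAux.one_five hassoc
  tfae_have 5 → 6 := LRAux.five_six
  tfae_have 6 → 1 := LRAux.six_one hassoc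
  tfae_finish
end

section
/- Let M be a Γ-semigroup. The following are equivalent: (1) M is right regular and MΓx ⊆ xΓM for every x ∈ M; (2) for every x ∈ M, N(x) = {y ∈ M | x ∈ yΓM}; (3) 𝒩 = ℛ; (4) for every right ideal R of M, R = ⋃_{x ∈ R} (x)_𝒩; (5) (x)_𝒩 is a right simple subsemigroup of M for every x ∈ M; (6) there exists a semilattice congruence σ on M such that (x)_σ is a right simple subsemigroup of M for every x ∈ M; (7) every right ideal of M is semiprime and is also a left ideal of M. -/
open GammaSemigroup


section RRAux

variable {M G : Type*} {mul : M → G → M → M}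

lemma rr_mem_right_iff {a c : M} :
    c ∈ sprod mul {a} Set.univ ↔ ∃ g : G, ∃ m : M, c = mul a g m := by
  constructor
  · rintro ⟨a', ha', g, m, -, rfl⟩
    rw [Set.mem_singleton_iff] at ha'
    subst ha'
    exact ⟨g, m, rfl⟩
  · rintro ⟨g, m, rfl⟩
    exact ⟨a, rfl, g, m, trivial, rfl⟩

lemma rr_filter_mul_mem_iff {F : Set M} (hF : IsFilter mul F) {a b : M} (g : G) :
    mul a g b ∈ F ↔ a ∈ F ∧ b ∈ F :=
  ⟨hF.2 a b g, fun h => hF.1.2 ⟨a, h.1, g, b, h.2, rfl⟩⟩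

lemma rr_mem_filN_self (a : M) : a ∈ filN mul a :=
  fun _ hF => hF.2

lemma rr_filN_subset {F : Set M} (hF : IsFilter mul F) {a : M} (ha : a ∈ F) :
    filN mul a ⊆ F :=
  Set.sInter_subset_of_mem ⟨hF, ha⟩

lemma rr_filN_eq_iff {a b : M} :
    filN mul a = filN mul b ↔ ∀ F : Set M, IsFilter mul F → (a ∈ F ↔ b ∈ F) := by
  constructor
  · intro h F hF
    constructor
    · intro ha
      have : filN mul b ⊆ F := h ▸ rr_filN_subset hF ha
      exact this (rr_mem_filN_self b)
    · intro hb
      have : filN mul a ⊆ F := h.symm ▸ rr_filN_subset hF hb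
      exact this (rr_mem_filN_self a)
  · intro h
    have hs : {F : Set M | IsFilter mul F ∧ a ∈ F} = {F : Set M | IsFilter mul F ∧ b ∈ F} := by
      ext F
      exact and_congr_right fun hF => h F hF
    unfold filN
    rw [hs]

lemma rr_filN_mul_self (a : M) (g : G) : filN mul (mul a g a) = filN mul a :=
  rr_filN_eq_iff.2 fun F hF => by rw [rr_filter_mul_mem_iff hF, and_self]

lemma rr_filN_mul_comm (a b : M) (g g' : G) :
    filN mul (mul a g b) = filN mul (mul b g' a) :=
  rr_filN_eq_iff.2 fun F hF => by
    rw [rr_filter_mul_mem_iff hF, rr_filter_mul_mem_iff hF, and_comm]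

lemma rr_filN_mul_congr {a b c : M} (ha : filN mul a = filN mul c)
    (hb : filN mul b = filN mul c) (g : G) :
    filN mul (mul a g b) = filN mul c :=
  rr_filN_eq_iff.2 fun F hF => by
    rw [rr_filter_mul_mem_iff hF, rr_filN_eq_iff.1 ha F hF, rr_filN_eq_iff.1 hb F hF, and_self]

lemma rr_right_simple_subset
    (hassoc : ∀ a b c : M, ∀ g d : G, mul (mul a g b) d c = mul a g (mul b d c))
    {T : Set M} (hT : IsRightSimple mul T) {c : M} (hc : c ∈ T) :
    T ⊆ {c} ∪ sprod mul {c} T := by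
  have hA : IsRightIdealOf mul T ({c} ∪ sprod mul {c} T) := by
    refine ⟨⟨c, Or.inl rfl⟩, ?_, ?_⟩
    · rintro a (ha | ⟨c', hc', g, t, ht, rfl⟩)
      · exact ha ▸ hc
      · have hc'c : c' = c := hc'
        exact hT.1.2 ⟨c', hc'c ▸ hc, g, t, ht, rfl⟩
    · rintro _ ⟨a, (ha | ⟨c', hc', g', u, hu, rfl⟩), g, t, ht, rfl⟩
      · exact Or.inr ⟨a, ha, g, t, ht, rfl⟩
      · refine Or.inr ⟨c', hc', g', mul u g t, hT.1.2 ⟨u, hu, g, t, ht, rfl⟩, ?_⟩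
        rw [hassoc]
  exact (hT.2 _ hA).symm.subset

lemma rr_isRightSimple_of_div {T : Set M} (hsub : IsSubsemigroup mul T)
    (h : ∀ a ∈ T, ∀ b ∈ T, ∃ g : G, ∃ u ∈ T, b = mul a g u) :
    IsRightSimple mul T := by
  refine ⟨hsub, fun A hA => ?_⟩
  obtain ⟨hne, hAT, hAI⟩ := hA
  refine Set.Subset.antisymm hAT fun b hb => ?_
  obtain ⟨a, ha⟩ := hne
  obtain ⟨g, u, hu, rfl⟩ := h a (hAT ha) b hb
  exact hAI ⟨a, ha, g, u, hu, rfl⟩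

end RRAux

section RRAux2

variable {M G : Type*} {mul : M → G → M → M}

lemma rr_one_two
    (hassoc : ∀ a b c : M, ∀ g d : G, mul (mul a g b) d c = mul a g (mul b d c))
    (hrr : IsRightRegular mul)
    (hdu : ∀ x : M, sprod mul Set.univ {x} ⊆ sprod mul {x} Set.univ) (g₀ : G) (x : M) :
    filN mul x = {y : M | x ∈ sprod mul {y} Set.univ} := by
  have hB : ∀ (y : M) (g : G), ∃ m, y = mul y g m := by
    intro y g
    obtain ⟨g', m, hm⟩ := rr_mem_right_iff.1 (hrr y g)
    exact ⟨mul y g' m, hm.trans (hassoc y y m g g')⟩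
  have hxT : x ∈ {y : M | x ∈ sprod mul {y} Set.univ} := by
    obtain ⟨m, hm⟩ := hB x g₀
    exact rr_mem_right_iff.2 ⟨g₀, m, hm⟩
  have hTfil : IsFilter mul {y : M | x ∈ sprod mul {y} Set.univ} := by
    refine ⟨⟨⟨x, hxT⟩, ?_⟩, ?_⟩
    · rintro _ ⟨y, hy, g, z, hz, rfl⟩
      obtain ⟨α, s, hys⟩ := rr_mem_right_iff.1 hy
      obtain ⟨β, u, hzu⟩ := rr_mem_right_iff.1 hz
      obtain ⟨m₀, hm₀⟩ := hB y g
      have hx1 : x = mul y g (mul m₀ α s) :=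
        hys.trans (by rw [← hassoc y m₀ s g α, ← hm₀])
      obtain ⟨δ, w, hw⟩ := rr_mem_right_iff.1 (hrr x g)
      have hx2 : mul (mul x g z) β (mul u δ w) = x := by
        calc mul (mul x g z) β (mul u δ w)
            = mul (mul (mul x g z) β u) δ w := (hassoc (mul x g z) u w β δ).symm
          _ = mul (mul x g (mul z β u)) δ w := by rw [hassoc x z u g β]
          _ = mul (mul x g x) δ w := by rw [← hzu]
          _ = x := hw.symm
      have hp' : mul (mul m₀ α s) g z ∈ sprod mul {z} Set.univ :=
        hdu z ⟨mul m₀ α s, trivial, g, z, rfl, rfl⟩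
      obtain ⟨ε, p, hp⟩ := rr_mem_right_iff.1 hp'
      show x ∈ sprod mul {mul y g z} Set.univ
      refine rr_mem_right_iff.2 ⟨ε, mul p β (mul u δ w), ?_⟩
      calc x = mul (mul x g z) β (mul u δ w) := hx2.symm
        _ = mul (mul (mul y g (mul m₀ α s)) g z) β (mul u δ w) := by rw [← hx1]
        _ = mul (mul y g (mul (mul m₀ α s) g z)) β (mul u δ w) := by
              rw [hassoc y (mul m₀ α s) z g g]
        _ = mul (mul y g (mul z ε p)) β (mul u δ w) := by rw [hp]
        _ = mul (mul (mul y g z) ε p) β (mul u δ w) := by rw [hassoc y z p g ε]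
        _ = mul (mul y g z) ε (mul p β (mul u δ w)) := hassoc (mul y g z) p (mul u δ w) ε β
    · intro a b g hab
      obtain ⟨δ, w, hw⟩ := rr_mem_right_iff.1 hab
      constructor
      · exact rr_mem_right_iff.2 ⟨g, mul b δ w, hw.trans (hassoc a b w g δ)⟩
      · have h1 : x = mul a g (mul b δ w) := hw.trans (hassoc a b w g δ)
        have h2 : mul a g (mul b δ w) ∈ sprod mul {mul b δ w} Set.univ :=
          hdu (mul b δ w) ⟨a, trivial, g, mul b δ w, rfl, rfl⟩
        obtain ⟨ε, r, hr⟩ := rr_mem_right_iff.1 h2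
        exact rr_mem_right_iff.2 ⟨δ, mul w ε r, by rw [h1, hr, hassoc]⟩
  apply Set.Subset.antisymm
  · exact rr_filN_subset hTfil hxT
  · intro y hy
    obtain ⟨α, s, hs⟩ := rr_mem_right_iff.1 hy
    apply Set.mem_sInter.2
    intro F hF
    exact (hF.1.2 y s α (hs ▸ hF.2)).1

end RRAux2

/-- Theorem 7: characterizations of right regular Γ-semigroups with MΓx ⊆ xΓM. -/
theorem right_regular_tfae {M G : Type*} [Nonempty M] [Nonempty G]
    (mul : M → G → M → M)
    (hassoc : ∀ a b c : M, ∀ g d : G, mul (mul a g b) d c = mul a g (mul b d c)) :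
    [ IsRightRegular mul ∧ ∀ x : M, sprod mul Set.univ {x} ⊆ sprod mul {x} Set.univ,
      ∀ x : M, filN mul x = {y : M | x ∈ sprod mul {y} Set.univ},
      ∀ a b : M, filN mul a = filN mul b ↔ Rgen mul a = Rgen mul b,
      ∀ R : Set M, IsRightIdeal mul R → R = ⋃ x ∈ R, NClass mul x,
      ∀ x : M, IsRightSimple mul (NClass mul x),
      ∃ σ : M → M → Prop, IsSemilatticeCongruence mul σ ∧
        ∀ x : M, IsRightSimple mul (sigmaClass σ x),
      ∀ R : Set M, IsRightIdeal mul R → IsSemiprime mul R ∧ IsLeftIdeal mul R ].TFAE := by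
  tfae_have 1 → 2 := by
    rintro ⟨hrr, hdu⟩
    exact rr_one_two hassoc hrr hdu (Classical.arbitrary G)
  tfae_have 2 → 3 := by
    intro h2 a b
    have key : ∀ u v : M, u ∈ sprod mul {v} Set.univ → Rgen mul u ⊆ Rgen mul v := by
      intro u v hu
      obtain ⟨g, s, hs⟩ := rr_mem_right_iff.1 hu
      rintro w (hw | hw)
      · exact Or.inr (by rw [show w = u from hw]; exact hu)
      · obtain ⟨g', m, hm⟩ := rr_mem_right_iff.1 hw
        exact Or.inr (rr_mem_right_iff.2 ⟨g, mul s g' m, by rw [hm, hs, hassoc]⟩)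
    constructor
    · intro hab
      have hba : b ∈ sprod mul {a} Set.univ := by
        have ha : a ∈ filN mul b := by rw [← hab]; exact rr_mem_filN_self a
        rw [h2 b] at ha
        exact ha
      have hab' : a ∈ sprod mul {b} Set.univ := by
        have hb : b ∈ filN mul a := by rw [hab]; exact rr_mem_filN_self b
        rw [h2 a] at hb
        exact hb
      exact Set.Subset.antisymm (key a b hab') (key b a hba)
    · intro hR
      have ha : a ∈ Rgen mul b := hR ▸ (Or.inl rfl : a ∈ Rgen mul a)
      have hb : b ∈ Rgen mul a := hR.symm ▸ (Or.inl rfl : b ∈ Rgen mul b)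
      rcases ha with ha | ha
      · rw [show a = b from ha]
      · rcases hb with hb | hb
        · rw [show b = a from hb]
        · obtain ⟨β, u, hau⟩ := rr_mem_right_iff.1 ha
          obtain ⟨α, s, hbs⟩ := rr_mem_right_iff.1 hb
          rw [h2 a, h2 b]
          ext y
          simp only [Set.mem_setOf_eq]
          constructor
          · intro hy
            obtain ⟨g, t, ht⟩ := rr_mem_right_iff.1 hy
            exact rr_mem_right_iff.2 ⟨g, mul t α s, by rw [hbs, ht, hassoc]⟩
          · intro hy
            obtain ⟨g, t, ht⟩ := rr_mem_right_iff.1 hy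
            exact rr_mem_right_iff.2 ⟨g, mul t β u, by rw [hau, ht, hassoc]⟩
  tfae_have 3 → 4 := by
    intro h3 R hR
    apply Set.Subset.antisymm
    · intro x hx
      exact Set.mem_biUnion hx (show filN mul x = filN mul x from rfl)
    · intro y hy
      simp only [Set.mem_iUnion] at hy
      obtain ⟨x, hx, hyx⟩ := hy
      have hRg : Rgen mul y = Rgen mul x := (h3 y x).1 hyx
      have hy' : y ∈ Rgen mul x := hRg ▸ (Or.inl rfl : y ∈ Rgen mul y)
      rcases hy' with h | h
      · exact (show y = x from h) ▸ hx
      · obtain ⟨g, m, hm⟩ := rr_mem_right_iff.1 h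
        exact hR.2 ⟨x, hx, g, m, trivial, hm⟩
  tfae_have 4 → 7 := by
    intro h4 R hR
    constructor
    · intro a g ha
      have h : a ∈ ⋃ x ∈ R, NClass mul x :=
        Set.mem_biUnion ha (show filN mul a = filN mul (mul a g a) from (rr_filN_mul_self a g).symm)
      rwa [← h4 R hR] at h
    · refine ⟨hR.1, ?_⟩
      rintro _ ⟨m, -, g, a, haR, rfl⟩
      have hc : mul a g m ∈ R := hR.2 ⟨a, haR, g, m, trivial, rfl⟩
      have h : mul m g a ∈ ⋃ x ∈ R, NClass mul x :=
        Set.mem_biUnion hc (rr_filN_mul_comm m a g g)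
      rwa [← h4 R hR] at h
  tfae_have 7 → 1 := by
    intro h7
    have hrr : IsRightRegular mul := by
      intro x g
      have hRid : IsRightIdeal mul (Rgen mul (mul x g x)) := by
        refine ⟨⟨mul x g x, Or.inl rfl⟩, ?_⟩
        rintro _ ⟨r, (hr | hr), g', m, -, rfl⟩
        · exact Or.inr ⟨mul x g x, rfl, g', m, trivial, by rw [show r = mul x g x from hr]⟩
        · obtain ⟨g₂, u, hu⟩ := rr_mem_right_iff.1 hr
          exact Or.inr (rr_mem_right_iff.2 ⟨g₂, mul u g' m, by rw [hu, hassoc]⟩)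
      have hx : x ∈ Rgen mul (mul x g x) := (h7 _ hRid).1 x g (Or.inl rfl)
      rcases hx with hx | hx
      · have e : x = mul x g x := hx
        refine rr_mem_right_iff.2 ⟨g, x, ?_⟩
        rw [hassoc x x x g g, ← e]
        exact e
      · exact hx
    refine ⟨hrr, ?_⟩
    intro x
    have hxm : x ∈ sprod mul {x} Set.univ := by
      obtain ⟨δ, t, ht⟩ := rr_mem_right_iff.1 (hrr x (Classical.arbitrary G))
      exact rr_mem_right_iff.2
        ⟨Classical.arbitrary G, mul x δ t, ht.trans (hassoc x x t (Classical.arbitrary G) δ)⟩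
    have hRid : IsRightIdeal mul (sprod mul {x} Set.univ) := by
      refine ⟨⟨x, hxm⟩, ?_⟩
      rintro _ ⟨r, hr, g, m, -, rfl⟩
      obtain ⟨g', u, hu⟩ := rr_mem_right_iff.1 hr
      exact rr_mem_right_iff.2 ⟨g', mul u g m, by rw [hu, hassoc]⟩
    have hli := (h7 _ hRid).2
    rintro _ ⟨m, -, g, x', hx', rfl⟩
    rw [show x' = x from hx']
    exact hli.2 ⟨m, trivial, g, x, hxm, rfl⟩
  tfae_have 2 → 5 := by
    intro h2 x
    have hdiv : ∀ a b : M, filN mul a = filN mul b → b ∈ sprod mul {a} Set.univ := by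
      intro a b h
      have ha : a ∈ filN mul b := by rw [← h]; exact rr_mem_filN_self a
      rw [h2 b] at ha
      exact ha
    have hsub : IsSubsemigroup mul (NClass mul x) := by
      refine ⟨⟨x, rfl⟩, ?_⟩
      rintro _ ⟨a, ha, g, b, hb, rfl⟩
      exact rr_filN_mul_congr ha hb g
    refine rr_isRightSimple_of_div hsub ?_
    intro a ha b hb
    have ha' : filN mul a = filN mul x := ha
    have hb' : filN mul b = filN mul x := hb
    obtain ⟨γ, m, hbm⟩ := rr_mem_right_iff.1 (hdiv a b (ha'.trans hb'.symm))
    obtain ⟨ε, w, hw⟩ := rr_mem_right_iff.1 (hdiv (mul b γ b) b (rr_filN_mul_self b γ))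
    have hbq : b = mul b γ (mul b ε w) := hw.trans (hassoc b b w γ ε)
    have hbu : b = mul a γ (mul m γ (mul b ε w)) := by
      calc b = mul b γ (mul b ε w) := hbq
        _ = mul (mul a γ m) γ (mul b ε w) := by rw [← hbm]
        _ = mul a γ (mul m γ (mul b ε w)) := hassoc a m (mul b ε w) γ γ
    have hub : filN mul (mul m γ (mul b ε w)) = filN mul b := by
      apply rr_filN_eq_iff.2
      intro F hF
      constructor
      · intro huF
        have hqF : mul b ε w ∈ F := (hF.2 m (mul b ε w) γ huF).2
        exact (hF.2 b w ε hqF).1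
      · intro hbF
        have hmF : m ∈ F := (hF.2 a m γ (hbm ▸ hbF)).2
        have hwF : w ∈ F := (hF.2 (mul b γ b) w ε (hw ▸ hbF)).2
        have hqF : mul b ε w ∈ F := hF.1.2 ⟨b, hbF, ε, w, hwF, rfl⟩
        exact hF.1.2 ⟨m, hmF, γ, mul b ε w, hqF, rfl⟩
    exact ⟨γ, mul m γ (mul b ε w), (show filN mul _ = filN mul x from hub.trans hb'), hbu⟩
  tfae_have 5 → 6 := by
    intro h5
    refine ⟨fun a b => filN mul a = filN mul b,
      ⟨⟨⟨fun _ => rfl, fun h => h.symm, fun h₁ h₂ => h₁.trans h₂⟩, ?_⟩, ?_, ?_⟩, ?_⟩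
    · intro a b c g h
      constructor
      · exact rr_filN_eq_iff.2 fun F hF => by
          rw [rr_filter_mul_mem_iff hF, rr_filter_mul_mem_iff hF, rr_filN_eq_iff.1 h F hF]
      · exact rr_filN_eq_iff.2 fun F hF => by
          rw [rr_filter_mul_mem_iff hF, rr_filter_mul_mem_iff hF, rr_filN_eq_iff.1 h F hF]
    · intro a b g
      exact rr_filN_mul_comm a b g g
    · intro a g
      exact rr_filN_mul_self a g
    · intro x
      exact h5 x
  tfae_have 6 → 7 := by
    rintro ⟨σ, ⟨⟨hEq, _⟩, hComm, hIdem⟩, hcls⟩ R hR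
    have key : ∀ c d : M, σ d c → d = c ∨ d ∈ sprod mul {c} Set.univ := by
      intro c d hdc
      have hmem := rr_right_simple_subset hassoc (hcls c)
        (show c ∈ sigmaClass σ c from hEq.refl c) (show d ∈ sigmaClass σ c from hdc)
      rcases hmem with h | ⟨c', hc', g, t, -, rfl⟩
      · exact Or.inl h
      · exact Or.inr ⟨c', hc', g, t, trivial, rfl⟩
    constructor
    · intro a g ha
      rcases key (mul a g a) a (hEq.symm (hIdem a g)) with h | h
      · rw [h]; exact ha
      · obtain ⟨g', m', hm'⟩ := rr_mem_right_iff.1 h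
        exact hR.2 ⟨mul a g a, ha, g', m', trivial, hm'⟩
    · refine ⟨hR.1, ?_⟩
      rintro _ ⟨m, -, g, a, haR, rfl⟩
      have hc : mul a g m ∈ R := hR.2 ⟨a, haR, g, m, trivial, rfl⟩
      rcases key (mul a g m) (mul m g a) (hComm m a g) with h | h
      · rw [h]; exact hc
      · obtain ⟨g', m', hm'⟩ := rr_mem_right_iff.1 h
        exact hR.2 ⟨mul a g m, hc, g', m', trivial, hm'⟩
  tfae_finish
end

section
/- If M is a Γ-semigroup, then ℐ ⊆ 𝒩; that is, for all a,b ∈ M, I(a) = I(b) implies N(a) = N(b). -/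
open GammaSemigroup

/-- Lemma 2: ℐ ⊆ 𝒩. -/
theorem I_subset_N {M G : Type*} [Nonempty M] [Nonempty G]
    (mul : M → G → M → M)
    (hassoc : ∀ a b c : M, ∀ g d : G, mul (mul a g b) d c = mul a g (mul b d c)) :
    ∀ a b : M, Igen mul a = Igen mul b → filN mul a = filN mul b := by
  -- key: if b ∈ I(a) and F is a filter containing b, then a ∈ F
  have key : ∀ a b : M, b ∈ Igen mul a → filN mul a ⊆ filN mul b := by
    intro a b hb
    have ha : ∀ F : Set M, IsFilter mul F → b ∈ F → a ∈ F := by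
      intro F hF hbF
      rcases hb with ((hb | hb) | hb) | hb
      · rwa [Set.mem_singleton_iff.mp hb] at hbF
      · rcases hb with ⟨x, -, g, y, hy, rfl⟩
        rw [Set.mem_singleton_iff.mp hy] at hbF
        exact (hF.2 _ _ _ hbF).2
      · rcases hb with ⟨y, hy, g, x, -, rfl⟩
        rw [Set.mem_singleton_iff.mp hy] at hbF
        exact (hF.2 _ _ _ hbF).1
      · rcases hb with ⟨c, hc, g, x, -, rfl⟩
        have hcF : c ∈ F := (hF.2 _ _ _ hbF).1
        rcases hc with ⟨z, -, d, y, hy, rfl⟩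
        rw [Set.mem_singleton_iff.mp hy] at hcF
        exact (hF.2 _ _ _ hcF).2
    intro x hx
    intro F hF
    exact hx F ⟨hF.1, ha F hF.1 hF.2⟩
  intro a b hI
  have hbIa : b ∈ Igen mul a := by
    rw [hI]; exact Or.inl (Or.inl (Or.inl rfl))
  have haIb : a ∈ Igen mul b := by
    rw [← hI]; exact Or.inl (Or.inl (Or.inl rfl))
  exact Set.Subset.antisymm (key a b hbIa) (key b a haIb)
end

section
/- If M is a Γ-semigroup, then ℒ ⊆ 𝒩 and ℛ ⊆ 𝒩; that is, for all a,b ∈ M, L(a) = L(b) implies N(a) = N(b), and R(a) = R(b) implies N(a) = N(b). -/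
open GammaSemigroup


lemma filN_eq_of_iff {M G : Type*} (mul : M → G → M → M) {a b : M}
    (h : ∀ F : Set M, IsFilter mul F → (a ∈ F ↔ b ∈ F)) :
    filN mul a = filN mul b := by
  unfold filN
  have : {F : Set M | IsFilter mul F ∧ a ∈ F} = {F : Set M | IsFilter mul F ∧ b ∈ F} := by
    ext F
    exact ⟨fun ⟨h1, h2⟩ => ⟨h1, (h F h1).mp h2⟩, fun ⟨h1, h2⟩ => ⟨h1, (h F h1).mpr h2⟩⟩
  rw [this]

/-- Lemma 5: ℒ ⊆ 𝒩 and ℛ ⊆ 𝒩. -/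
theorem L_subset_N_and_R_subset_N {M G : Type*} [Nonempty M] [Nonempty G]
    (mul : M → G → M → M)
    (hassoc : ∀ a b c : M, ∀ g d : G, mul (mul a g b) d c = mul a g (mul b d c)) :
    (∀ a b : M, Lgen mul a = Lgen mul b → filN mul a = filN mul b) ∧
    (∀ a b : M, Rgen mul a = Rgen mul b → filN mul a = filN mul b) := by
  constructor
  · intro a b hL
    have hb : b ∈ Lgen mul a := hL ▸ Set.mem_union_left _ rfl
    have ha : a ∈ Lgen mul b := hL.symm ▸ Set.mem_union_left _ rfl
    rcases hb with hb | ⟨m, _, g, x, hx, hb⟩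
    · rw [Set.mem_singleton_iff.mp hb]
    rcases ha with ha | ⟨m', _, g', x', hx', ha⟩
    · rw [Set.mem_singleton_iff.mp ha]
    apply filN_eq_of_iff
    intro F hF
    constructor
    · intro haF
      rw [Set.mem_singleton_iff.mp hx'] at ha
      rw [ha] at haF
      exact (hF.2 _ _ _ haF).2
    · intro hbF
      rw [Set.mem_singleton_iff.mp hx] at hb
      rw [hb] at hbF
      exact (hF.2 _ _ _ hbF).2
  · intro a b hR
    have hb : b ∈ Rgen mul a := hR ▸ Set.mem_union_left _ rfl
    have ha : a ∈ Rgen mul b := hR.symm ▸ Set.mem_union_left _ rfl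
    rcases hb with hb | ⟨x, hx, g, m, _, hb⟩
    · rw [Set.mem_singleton_iff.mp hb]
    rcases ha with ha | ⟨x', hx', g', m', _, ha⟩
    · rw [Set.mem_singleton_iff.mp ha]
    apply filN_eq_of_iff
    intro F hF
    constructor
    · intro haF
      rw [Set.mem_singleton_iff.mp hx'] at ha
      rw [ha] at haF
      exact (hF.2 _ _ _ haF).1
    · intro hbF
      rw [Set.mem_singleton_iff.mp hx] at hb
      rw [hb] at hbF
      exact (hF.2 _ _ _ hbF).1
end

section
/- Every left regular Γ-semigroup is intra-regular; that is, if M is a Γ-semigroup with x ∈ MΓ(xγx) for every x ∈ M and every γ ∈ Γ, then x ∈ MΓ(xγx)ΓM for every x ∈ M and every γ ∈ Γ. -/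
open GammaSemigroup

/-- Every left regular Γ-semigroup is intra-regular. -/
theorem left_regular_intra_regular {M G : Type*} [Nonempty M] [Nonempty G]
    (mul : M → G → M → M)
    (hassoc : ∀ a b c : M, ∀ g d : G, mul (mul a g b) d c = mul a g (mul b d c))
    (h : IsLeftRegular mul) :
    IsIntraRegular mul := by
  intro x g
  obtain ⟨a, -, d, b, hb, hx⟩ := h x g
  simp only [Set.mem_singleton_iff] at hb
  subst hb
  refine ⟨mul (mul a d a) d (mul x g x), ⟨mul a d a, trivial, d, mul x g x, rfl, rfl⟩,
    g, x, trivial, ?_⟩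
  rw [hassoc, hassoc, ← hassoc a (mul x g x) x d g, ← hx]
  exact hx
end

section
/- If M is an intra-regular Γ-semigroup, then for every x ∈ M the set {y ∈ M | x ∈ MΓyΓM} is a filter of M, and it equals N(x), the filter of M generated by x. -/
open GammaSemigroup

section Helpers

variable {M G : Type*} (mul : M → G → M → M)

/-- Convenient form of membership in MΓyΓM. -/
def Pm (y x : M) : Prop := ∃ u : M, ∃ a : G, ∃ b : G, ∃ v : M, x = mul (mul u a y) b v

lemma mem_sprod_iff_Pm {x y : M} :
    x ∈ sprod mul (sprod mul Set.univ {y}) Set.univ ↔ Pm mul y x := by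
  constructor
  · rintro ⟨p, ⟨u, -, a, v', hv', rfl⟩, b, v, -, rfl⟩
    rcases hv' with rfl
    exact ⟨u, a, b, v, rfl⟩
  · rintro ⟨u, a, b, v, rfl⟩
    exact ⟨mul u a y, ⟨u, trivial, a, y, rfl, rfl⟩, b, v, trivial, rfl⟩

variable (hassoc : ∀ a b c : M, ∀ g d : G, mul (mul a g b) d c = mul a g (mul b d c))
  (h : IsIntraRegular mul)

include hassoc in
lemma Pm_trans {x y z : M} (h1 : Pm mul y x) (h2 : Pm mul z y) : Pm mul z x := by
  obtain ⟨u, a, b, v, rfl⟩ := h1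
  obtain ⟨p, c, d, q, rfl⟩ := h2
  exact ⟨mul u a p, c, d, mul q b v, by simp only [hassoc]⟩

include hassoc in
lemma Pm_left {x y z : M} {e : G} (h1 : Pm mul (mul y e z) x) : Pm mul y x := by
  obtain ⟨u, a, b, v, rfl⟩ := h1
  exact ⟨u, a, e, mul z b v, by simp only [hassoc]⟩

include hassoc in
lemma Pm_right {x y z : M} {e : G} (h1 : Pm mul (mul y e z) x) : Pm mul z x := by
  obtain ⟨u, a, b, v, rfl⟩ := h1
  exact ⟨mul u a y, e, b, v, by simp only [hassoc]⟩

include hassoc h in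
/-- commutativity lemma: uγv ∈ MΓ(vμu)ΓM. -/
lemma Pm_comm (u v : M) (g m : G) : Pm mul (mul v m u) (mul u g v) := by
  have := (mem_sprod_iff_Pm mul).1 (h (mul u g v) m)
  obtain ⟨s, c, d, t, hw⟩ := this
  refine ⟨mul s c u, g, g, mul v d t, ?_⟩
  conv_lhs => rw [hw]
  simp only [hassoc]

include hassoc h in
/-- x ∈ MΓyΓM → x ∈ MΓ(xμy)ΓM. -/
lemma Pm_mul_self_left {x y : M} (hy : Pm mul y x) (m : G) : Pm mul (mul x m y) x := by
  obtain ⟨a, al, be, b, hx⟩ := hy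
  -- x ∈ MΓ(x m x)ΓM
  have h1 : Pm mul (mul x m x) x := (mem_sprod_iff_Pm mul).1 (h x m)
  -- mul x m x = mul a al (mul y be (mul b m x))
  have e1 : mul x m x = mul a al (mul y be (mul b m x)) := by
    nth_rewrite 1 [hx]
    simp only [hassoc]
  obtain ⟨s, c, d, t, hx2⟩ := h1
  -- x ∈ MΓ(y be Q)ΓM where Q = mul b m x
  have h2 : Pm mul (mul y be (mul b m x)) x := by
    refine ⟨mul s c a, al, d, t, ?_⟩
    conv_lhs => rw [hx2, e1]
    simp only [hassoc]
  -- commute: y be Q ~ Q m y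
  have h3 : Pm mul (mul (mul b m x) m y) x :=
    Pm_trans mul hassoc h2 (Pm_comm mul hassoc h y (mul b m x) be m)
  have e2 : mul (mul b m x) m y = mul b m (mul x m y) := hassoc ..
  rw [e2] at h3
  exact Pm_right mul hassoc h3

include hassoc h in
lemma Pm_mul {x y z : M} (hy : Pm mul y x) (hz : Pm mul z x) (g : G) :
    Pm mul (mul y g z) x := by
  have h1 : Pm mul (mul x g y) x := Pm_mul_self_left mul hassoc h hy g
  obtain ⟨c, ga, de, d, hx⟩ := hz
  have e1 : mul x g y = mul c ga (mul z de (mul d g y)) := by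
    conv_lhs => rw [hx]
    simp only [hassoc]
  rw [e1] at h1
  have h2 : Pm mul (mul z de (mul d g y)) x := Pm_right mul hassoc h1
  have h3 : Pm mul (mul (mul d g y) g z) x :=
    Pm_trans mul hassoc h2 (Pm_comm mul hassoc h z (mul d g y) de g)
  rw [hassoc] at h3
  exact Pm_right mul hassoc h3

end Helpers


/-- In an intra-regular Γ-semigroup, {y | x ∈ MΓyΓM} is a filter and equals N(x). -/
theorem intra_regular_filter_N {M G : Type*} [Nonempty M] [Nonempty G]
    (mul : M → G → M → M)
    (hassoc : ∀ a b c : M, ∀ g d : G, mul (mul a g b) d c = mul a g (mul b d c))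
    (h : IsIntraRegular mul) :
    ∀ x : M,
      IsFilter mul {y : M | x ∈ sprod mul (sprod mul Set.univ {y}) Set.univ} ∧
      {y : M | x ∈ sprod mul (sprod mul Set.univ {y}) Set.univ} = filN mul x := by
  intro x
  obtain ⟨g0⟩ := ‹Nonempty G›
  have key : ∀ y : M, x ∈ sprod mul (sprod mul Set.univ {y}) Set.univ ↔ Pm mul y x :=
    fun _ => mem_sprod_iff_Pm mul
  have hxx : Pm mul x x := by
    obtain ⟨u, a, b, v, hx⟩ := (mem_sprod_iff_Pm mul).1 (h x g0)
    refine ⟨mul u a x, g0, b, v, ?_⟩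
    conv_lhs => rw [hx]
    simp only [hassoc]
  have hF : IsFilter mul {y : M | x ∈ sprod mul (sprod mul Set.univ {y}) Set.univ} := by
    refine ⟨⟨⟨x, (key x).2 hxx⟩, ?_⟩, ?_⟩
    · rintro c ⟨yy, hy, g, zz, hz, rfl⟩
      exact (key _).2 (Pm_mul mul hassoc h ((key _).1 hy) ((key _).1 hz) g)
    · intro a b g hab
      have hm := (key _).1 hab
      exact ⟨(key _).2 (Pm_left mul hassoc hm), (key _).2 (Pm_right mul hassoc hm)⟩
  refine ⟨hF, Set.Subset.antisymm ?_ ?_⟩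
  · intro y hy
    apply Set.mem_sInter.2
    rintro K ⟨⟨-, hback⟩, hxK⟩
    obtain ⟨u, a, b, v, hx⟩ := (key y).1 hy
    have h1 : mul (mul u a y) b v ∈ K := by rw [← hx]; exact hxK
    exact (hback _ _ _ (hback _ _ _ h1).1).2
  · intro y hy
    exact Set.mem_sInter.1 hy _ ⟨hF, (key x).2 hxx⟩
end

section
/- Let M be a Γ-semigroup such that N(x) = {y ∈ M | x ∈ MΓyΓM} for every x ∈ M. Then 𝒩 = ℐ; that is, for all a,b ∈ M, N(a) = N(b) if and only if I(a) = I(b). -/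
open GammaSemigroup

/-- If N(x) = {y | x ∈ MΓyΓM} for all x, then 𝒩 = ℐ. -/
theorem N_eq_I {M G : Type*} [Nonempty M] [Nonempty G]
    (mul : M → G → M → M)
    (hassoc : ∀ a b c : M, ∀ g d : G, mul (mul a g b) d c = mul a g (mul b d c))
    (h : ∀ x : M, filN mul x = {y : M | x ∈ sprod mul (sprod mul Set.univ {y}) Set.univ}) :
    ∀ a b : M, filN mul a = filN mul b ↔ Igen mul a = Igen mul b := by
  -- J y = MΓyΓM
  set J : M → Set M := fun y => sprod mul (sprod mul Set.univ {y}) Set.univ with hJ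
  have mem_J : ∀ x y : M, x ∈ J y ↔ ∃ p : M, ∃ a : G, ∃ g : G, ∃ q : M,
      x = mul (mul p a y) g q := by
    intro x y
    constructor
    · rintro ⟨m, ⟨p, -, a, z, hz, rfl⟩, g, q, -, rfl⟩
      rcases hz with rfl
      exact ⟨p, a, g, q, rfl⟩
    · rintro ⟨p, a, g, q, rfl⟩
      exact ⟨mul p a y, ⟨p, trivial, a, y, rfl, rfl⟩, g, q, trivial, rfl⟩
  -- every x satisfies x ∈ J x
  have self : ∀ x : M, x ∈ J x := by
    intro x
    have hx : x ∈ filN mul x := by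
      intro F hF; exact hF.2
    rw [h x] at hx
    exact hx
  -- monotonicity
  have mono : ∀ a b : M, a ∈ J b → J a ⊆ J b := by
    intro a b hab x hx
    rcases (mem_J a b).1 hab with ⟨p, α, γ, q, rfl⟩
    rcases (mem_J x _).1 hx with ⟨m, β, δ, n, rfl⟩
    refine (mem_J _ _).2 ⟨mul m β p, α, γ, mul q δ n, ?_⟩
    simp only [hassoc]
  -- I a = J a
  have IeqJ : ∀ a : M, Igen mul a = J a := by
    intro a
    apply Set.Subset.antisymm
    · intro x hx
      rcases self a |> (mem_J a a).1 with ⟨p, α, γ, q, ha⟩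
      rcases hx with ((hx | hx) | hx) | hx
      · rcases hx with rfl; exact self x
      · rcases hx with ⟨m, -, β, z, hz, rfl⟩
        rcases hz with rfl
        refine (mem_J _ _).2 ⟨mul m β p, α, γ, q, ?_⟩
        rw [hassoc, hassoc, ← hassoc p z q α γ, ← ha]
      · rcases hx with ⟨z, hz, β, m, -, rfl⟩
        rcases hz with rfl
        refine (mem_J _ _).2 ⟨p, α, γ, mul q β m, ?_⟩
        rw [← hassoc (mul p α z) q m γ β, ← ha]
      · exact hx
    · intro x hx
      exact Or.inr hx
  -- N a = N b ↔ J a = J b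
  intro a b
  rw [IeqJ, IeqJ]
  constructor
  · intro hN
    have hab : b ∈ J a := by
      have : a ∈ filN mul a := by intro F hF; exact hF.2
      rw [hN, h b] at this
      exact this
    have hba : a ∈ J b := by
      have : b ∈ filN mul b := by intro F hF; exact hF.2
      rw [← hN, h a] at this
      exact this
    exact Set.Subset.antisymm (mono _ _ hba) (mono _ _ hab)
  · intro hI
    ext y
    rw [h a, h b]
    constructor
    · intro hy
      exact (hI ▸ mono a y hy : J b ⊆ J y) (self b)
    · intro hy
      exact (hI ▸ mono b y hy : J a ⊆ J y) (self a)
end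

section
/- Let M be a Γ-semigroup and suppose there exists a semilattice congruence σ on M such that (x)_σ is a simple subsemigroup of M for every x ∈ M. Then every ideal of M is semiprime. -/
open GammaSemigroup

/-- If M is a semilattice of simple semigroups, then every ideal of M is semiprime. -/
theorem semilattice_of_simple_semiprime {M G : Type*} [Nonempty M] [Nonempty G]
    (mul : M → G → M → M)
    (hassoc : ∀ a b c : M, ∀ g d : G, mul (mul a g b) d c = mul a g (mul b d c))
    (h : ∃ σ : M → M → Prop, IsSemilatticeCongruence mul σ ∧
      ∀ x : M, IsSimple mul (sigmaClass σ x)) :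
    ∀ I : Set M, IsIdeal mul I → IsSemiprime mul I := by
  obtain ⟨σ, ⟨⟨hequiv, hcomp⟩, hcomm, hidem⟩, hsimple⟩ := h
  intro I hI a g ha
  obtain ⟨⟨⟨hTne, hTsub⟩, hTleft⟩, _⟩ := hsimple a
  have haT : a ∈ sigmaClass σ a := hequiv.refl a
  have haaT : mul a g a ∈ sigmaClass σ a := hidem a g
  have hA : IsLeftIdealOf mul (sigmaClass σ a) (I ∩ sigmaClass σ a) := by
    refine ⟨⟨mul a g a, ha, haaT⟩, Set.inter_subset_right, ?_⟩
    rintro c ⟨t, ht, g', x, ⟨hxI, hxT⟩, rfl⟩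
    exact ⟨hI.1.2 ⟨t, Set.mem_univ t, g', x, hxI, rfl⟩,
      hTsub ⟨t, ht, g', x, hxT, rfl⟩⟩
  have heq := hTleft _ hA
  rw [← heq] at haT
  exact haT.1
end

section
/- Let M be a Γ-semigroup in which every ideal is semiprime. Then M is intra-regular. -/
open GammaSemigroup

/-- If every ideal is semiprime, then M is intra-regular. -/
theorem semiprime_intra_regular {M G : Type*} [Nonempty M] [Nonempty G]
    (mul : M → G → M → M)
    (hassoc : ∀ a b c : M, ∀ g d : G, mul (mul a g b) d c = mul a g (mul b d c))
    (h : ∀ I : Set M, IsIdeal mul I → IsSemiprime mul I) :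
    IsIntraRegular mul := by
  intro x g
  set T : Set M := sprod mul (sprod mul Set.univ {mul x g x}) Set.univ with hT
  have hmem : ∀ m b : M, ∀ γ ε : G, mul (mul m γ (mul x g x)) ε b ∈ T := by
    intro m b γ ε
    exact ⟨mul m γ (mul x g x), ⟨m, Set.mem_univ _, γ, mul x g x, rfl, rfl⟩,
      ε, b, Set.mem_univ _, rfl⟩
  have hideal : IsIdeal mul T := by
    refine ⟨⟨⟨_, hmem x x g g⟩, ?_⟩, ⟨⟨_, hmem x x g g⟩, ?_⟩⟩
    · rintro c ⟨m, -, γ, t, ⟨p, ⟨a, -, δ, s, rfl, rfl⟩, ε, b, -, rfl⟩, rfl⟩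
      have := hmem (mul m γ a) b δ ε
      simp only [hassoc] at this ⊢
      exact this
    · rintro c ⟨t, ⟨p, ⟨a, -, δ, s, rfl, rfl⟩, ε, b, -, rfl⟩, γ, m, -, rfl⟩
      have : mul (mul (mul a δ (mul x g x)) ε b) γ m
          = mul (mul a δ (mul x g x)) ε (mul b γ m) := by rw [hassoc]
      rw [this]; exact hmem _ _ _ _
  have hsp := h T hideal
  have h1 : mul (mul x g x) g (mul x g x) ∈ T := by
    have := hmem x x g g
    simp only [hassoc] at this ⊢
    exact this
  have h2 : mul x g x ∈ T := hsp _ g h1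
  exact hsp x g h2
end

section
/- Let M be a Γ-semigroup which is left regular and satisfies xΓM ⊆ MΓx for every x ∈ M. Then for every x ∈ M the set {y ∈ M | x ∈ MΓy} is a filter of M, and it equals N(x), the filter of M generated by x. -/
open GammaSemigroup

/-- If M is left regular with xΓM ⊆ MΓx, then {y | x ∈ MΓy} is a filter and
equals N(x). -/
theorem left_regular_filter_N {M G : Type*} [Nonempty M] [Nonempty G]
    (mul : M → G → M → M)
    (hassoc : ∀ a b c : M, ∀ g d : G, mul (mul a g b) d c = mul a g (mul b d c))
    (h1 : IsLeftRegular mul)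
    (h2 : ∀ x : M, sprod mul {x} Set.univ ⊆ sprod mul Set.univ {x}) :
    ∀ x : M,
      IsFilter mul {y : M | x ∈ sprod mul Set.univ {y}} ∧
      {y : M | x ∈ sprod mul Set.univ {y}} = filN mul x := by
  -- membership characterization
  have mem_iff : ∀ w y : M, w ∈ sprod mul Set.univ ({y} : Set M) ↔ ∃ a : M, ∃ g : G, w = mul a g y := by
    intro w y
    constructor
    · rintro ⟨a, -, g, b, rfl, h⟩
      exact ⟨a, g, h⟩
    · rintro ⟨a, g, h⟩
      exact ⟨a, Set.mem_univ a, g, y, rfl, h⟩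
  have swap : ∀ y a : M, ∀ g : G, ∃ t : M, ∃ m : G, mul y g a = mul t m y := by
    intro y a g
    have : mul y g a ∈ sprod mul Set.univ ({y} : Set M) :=
      h2 y ⟨y, rfl, g, a, Set.mem_univ a, rfl⟩
    exact (mem_iff _ _).1 this
  intro x
  -- x ∈ F
  have hxF : ∃ a : M, ∃ g : G, x = mul a g x := by
    obtain ⟨g⟩ := ‹Nonempty G›
    obtain ⟨m, h, hx⟩ := (mem_iff x (mul x g x)).1 (h1 x g)
    exact ⟨mul m h x, g, by rw [hassoc, ← hx]⟩
  -- key: if x ∈ MΓz then for any δ, x = a δ z for some a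
  have key : ∀ z : M, (∃ a : M, ∃ g : G, x = mul a g z) → ∀ d : G, ∃ a : M, x = mul a d z := by
    rintro z ⟨a, g, hx⟩ d
    obtain ⟨n, k, hz⟩ := (mem_iff z (mul z d z)).1 (h1 z d)
    refine ⟨mul (mul a g n) k z, ?_⟩
    rw [hassoc, hassoc, ← hz, ← hx]
  have hFfilter : IsFilter mul {y : M | x ∈ sprod mul Set.univ {y}} := by
    constructor
    · constructor
      · exact ⟨x, (mem_iff x x).2 hxF⟩
      · rintro w ⟨y, hy, d, z, hz, rfl⟩
        rw [Set.mem_setOf_eq, mem_iff] at hy hz ⊢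
        obtain ⟨c, b, hc⟩ := hy
        obtain ⟨a, ha⟩ := key z hz d
        obtain ⟨m, h, hm⟩ := (mem_iff x (mul x d x)).1 (h1 x d)
        obtain ⟨t, mu, ht⟩ := swap y a d
        refine ⟨mul m h (mul c b t), mu, ?_⟩
        calc x = mul m h (mul x d x) := hm
          _ = mul m h (mul (mul c b y) d (mul a d z)) := by rw [← hc, ← ha]
          _ = mul m h (mul c b (mul (mul y d a) d z)) := by
              rw [hassoc c y (mul a d z) b d, ← hassoc y a z d d]
          _ = mul m h (mul c b (mul (mul t mu y) d z)) := by rw [ht]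
          _ = mul (mul m h (mul c b t)) mu (mul y d z) := by
              rw [hassoc t y z mu d, ← hassoc c t (mul y d z) b mu,
                ← hassoc m (mul c b t) (mul y d z) h mu]
    · intro a b g hab
      rw [Set.mem_setOf_eq, mem_iff] at hab
      obtain ⟨m, h, hm⟩ := hab
      constructor
      · rw [Set.mem_setOf_eq, mem_iff]
        obtain ⟨u, l, hu⟩ := swap a b g
        exact ⟨mul m h u, l, by rw [hm, hu, hassoc]⟩
      · rw [Set.mem_setOf_eq, mem_iff]
        exact ⟨mul m h a, g, by rw [hm, hassoc]⟩
  refine ⟨hFfilter, ?_⟩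
  apply Set.Subset.antisymm
  · intro y hy
    rw [Set.mem_setOf_eq, mem_iff] at hy
    obtain ⟨a, g, ha⟩ := hy
    intro P hP
    obtain ⟨hPf, hxP⟩ := hP
    exact (hPf.2 a y g (by rw [← ha]; exact hxP)).2
  · exact Set.sInter_subset_of_mem ⟨hFfilter, (mem_iff x x).2 hxF⟩
end

section
/- Let M be a Γ-semigroup in which every left ideal L of M satisfies L = ⋃_{x ∈ L} (x)_𝒩. Then for every x ∈ M, the 𝒩-class (x)_𝒩 is a left simple subsemigroup of M. -/
open GammaSemigroup
section Aux

variable {M G : Type*} [Nonempty M] [Nonempty G] (mul : M → G → M → M)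

lemma mem_filN_self (x : M) : x ∈ filN mul x :=
  Set.mem_sInter.2 fun _ hF => hF.2

lemma filN_isFilter (x : M) : IsFilter mul (filN mul x) := by
  constructor
  · constructor
    · exact ⟨x, mem_filN_self mul x⟩
    · rintro c ⟨a, ha, g, b, hb, rfl⟩
      exact Set.mem_sInter.2 fun F hF =>
        hF.1.1.2 ⟨a, Set.mem_sInter.1 ha F hF, g, b, Set.mem_sInter.1 hb F hF, rfl⟩
  · intro a b g hab
    constructor
    · exact Set.mem_sInter.2 fun F hF => (hF.1.2 a b g (Set.mem_sInter.1 hab F hF)).1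
    · exact Set.mem_sInter.2 fun F hF => (hF.1.2 a b g (Set.mem_sInter.1 hab F hF)).2

lemma filN_subset {a y : M} (ha : a ∈ filN mul y) : filN mul a ⊆ filN mul y :=
  Set.sInter_subset_of_mem ⟨filN_isFilter mul y, ha⟩

lemma filN_mul_mem {F : Set M} (hF : IsFilter mul F) {a b : M} (g : G)
    (ha : a ∈ F) (hb : b ∈ F) : mul a g b ∈ F :=
  hF.1.2 ⟨a, ha, g, b, hb, rfl⟩

lemma filN_left_subset (a b : M) (g : G) : filN mul a ⊆ filN mul (mul a g b) :=
  fun z hz => Set.mem_sInter.2 fun F hF =>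
    Set.mem_sInter.1 hz F ⟨hF.1, (hF.1.2 a b g hF.2).1⟩

lemma filN_right_subset (a b : M) (g : G) : filN mul b ⊆ filN mul (mul a g b) :=
  fun z hz => Set.mem_sInter.2 fun F hF =>
    Set.mem_sInter.1 hz F ⟨hF.1, (hF.1.2 a b g hF.2).2⟩

/-- N-classes are closed under multiplication. -/
lemma nclass_mul {x a b : M} (ha : a ∈ NClass mul x) (hb : b ∈ NClass mul x) (g : G) :
    mul a g b ∈ NClass mul x := by
  have h1 : filN mul x ⊆ filN mul (mul a g b) := by
    rw [← ha]; exact filN_left_subset mul a b g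
  have h2 : filN mul (mul a g b) ⊆ filN mul x := by
    apply filN_subset
    exact filN_mul_mem mul (filN_isFilter mul x) g
      (ha ▸ mem_filN_self mul a) (hb ▸ mem_filN_self mul b)
  exact Set.Subset.antisymm h2 h1

lemma nclass_eq {x y : M} (hy : y ∈ NClass mul x) : NClass mul y = NClass mul x := by
  ext z; simp only [NClass, Set.mem_setOf_eq]
  rw [show filN mul y = filN mul x from hy]

end Aux

section Aux2

variable {M G : Type*} [Nonempty M] [Nonempty G] (mul : M → G → M → M)
variable (hassoc : ∀ a b c : M, ∀ g d : G, mul (mul a g b) d c = mul a g (mul b d c))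
variable (h : ∀ L : Set M, IsLeftIdeal mul L → L = ⋃ x ∈ L, NClass mul x)

include hassoc h in
/-- Under the hypothesis, M is "left regular-like": c ∈ MΓc for every c. -/
lemma self_mem_MGc (c : M) : c ∈ sprod mul Set.univ {c} := by
  obtain ⟨γ⟩ := (inferInstance : Nonempty G)
  set b := mul c γ c with hb
  have hL : IsLeftIdeal mul ({b} ∪ sprod mul Set.univ {b}) := by
    constructor
    · exact ⟨b, Or.inl rfl⟩
    · rintro z ⟨m, -, g, w, hw, rfl⟩
      rcases hw with hw | ⟨n, -, d, v, hv, rfl⟩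
      · exact Or.inr ⟨m, trivial, g, w, hw, rfl⟩
      · exact Or.inr ⟨mul m g n, trivial, d, v, hv, (hassoc m n v g d).symm⟩
  have hcb : c ∈ NClass mul b := by
    show filN mul c = filN mul b
    refine Set.Subset.antisymm (filN_left_subset mul c c γ) ?_
    exact filN_subset mul (filN_mul_mem mul (filN_isFilter mul c) γ
      (mem_filN_self mul c) (mem_filN_self mul c))
  have hcmem : c ∈ ({b} ∪ sprod mul Set.univ {b} : Set M) := by
    rw [h _ hL]
    exact Set.mem_biUnion (Or.inl rfl) hcb
  rcases hcmem with hcmem | ⟨m, -, g, w, hw, hcw⟩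
  · have : c = mul c γ c := hcmem
    exact ⟨c, trivial, γ, c, rfl, this⟩
  · rcases hw with rfl
    refine ⟨mul m g c, trivial, γ, c, rfl, ?_⟩
    rw [hassoc]; exact hcw

include hassoc h in
lemma nclass_subset_MGc (c : M) : NClass mul c ⊆ sprod mul Set.univ {c} := by
  have hL : IsLeftIdeal mul (sprod mul Set.univ {c}) := by
    constructor
    · exact ⟨c, self_mem_MGc mul hassoc h c⟩
    · rintro z ⟨m, -, g, w, ⟨n, -, d, v, hv, rfl⟩, rfl⟩
      exact ⟨mul m g n, trivial, d, v, hv, (hassoc m n v g d).symm⟩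
  intro t ht
  rw [h _ hL]
  exact Set.mem_biUnion (self_mem_MGc mul hassoc h c) ht

end Aux2

/-- If every left ideal is a union of 𝒩-classes, then every 𝒩-class is a left
simple subsemigroup. -/
theorem N_class_left_simple {M G : Type*} [Nonempty M] [Nonempty G]
    (mul : M → G → M → M)
    (hassoc : ∀ a b c : M, ∀ g d : G, mul (mul a g b) d c = mul a g (mul b d c))
    (h : ∀ L : Set M, IsLeftIdeal mul L → L = ⋃ x ∈ L, NClass mul x) :
    ∀ x : M, IsLeftSimple mul (NClass mul x) := by
  intro x
  constructor
  · constructor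
    · exact ⟨x, rfl⟩
    · rintro z ⟨a, ha, g, b, hb, rfl⟩
      exact nclass_mul mul ha hb g
  · rintro A ⟨⟨a, haA⟩, hAT, hTA⟩
    refine Set.Subset.antisymm hAT fun t ht => ?_
    obtain ⟨β⟩ := (inferInstance : Nonempty G)
    have haT : a ∈ NClass mul x := hAT haA
    have hbT : mul a β a ∈ NClass mul x := nclass_mul mul haT haT β
    have ht' : t ∈ NClass mul (mul a β a) := by
      rw [nclass_eq mul hbT]; exact ht
    obtain ⟨m, -, g, w, hw, hteq⟩ := nclass_subset_MGc mul hassoc h (mul a β a) ht'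
    rcases hw with rfl
    have hteq2 : t = mul (mul m g a) β a := by rw [hassoc]; exact hteq
    set u := mul m g a with hu
    have htN : t ∈ filN mul x := by
      have : t ∈ filN mul t := mem_filN_self mul t
      rwa [show filN mul t = filN mul x from ht] at this
    have huN : u ∈ filN mul x :=
      ((filN_isFilter mul x).2 u a β (hteq2 ▸ htN)).1
    have hu1 : filN mul u ⊆ filN mul x := filN_subset mul huN
    have hu2 : filN mul x ⊆ filN mul u := by
      rw [← show filN mul a = filN mul x from haT]
      exact filN_right_subset mul m a g
    have huT : u ∈ NClass mul x := Set.Subset.antisymm hu1 hu2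
    exact hTA ⟨u, huT, β, a, haA, hteq2⟩
end

section
/- Let M be a Γ-semigroup and suppose there exists a semilattice congruence σ on M such that (x)_σ is a left simple subsemigroup of M for every x ∈ M. Then every left ideal of M is semiprime and is also a right ideal of M. -/
open GammaSemigroup

/-- If M is a semilattice of left simple semigroups, then every left ideal of M is
semiprime and two-sided. -/
theorem semilattice_of_left_simple {M G : Type*} [Nonempty M] [Nonempty G]
    (mul : M → G → M → M)
    (hassoc : ∀ a b c : M, ∀ g d : G, mul (mul a g b) d c = mul a g (mul b d c))
    (σ : M → M → Prop) (hσ : IsSemilatticeCongruence mul σ)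
    (hcls : ∀ x : M, IsLeftSimple mul (sigmaClass σ x)) :
    ∀ L : Set M, IsLeftIdeal mul L → IsSemiprime mul L ∧ IsRightIdeal mul L := by
  obtain ⟨⟨hequiv, hcomp⟩, hcomm, hidem⟩ := hσ
  intro L hL
  -- key: if L meets a σ-class T, then T ⊆ L
  have key : ∀ x : M, (L ∩ sigmaClass σ x).Nonempty → sigmaClass σ x ⊆ L := by
    intro x hne
    obtain ⟨hsub, hls⟩ := hcls x
    have hA : IsLeftIdealOf mul (sigmaClass σ x) (L ∩ sigmaClass σ x) := by
      refine ⟨hne, Set.inter_subset_right, ?_⟩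
      rintro c ⟨t, ht, g, a, ⟨haL, haT⟩, rfl⟩
      refine ⟨hL.2 ⟨t, trivial, g, a, haL, rfl⟩, ?_⟩
      exact hsub.2 ⟨t, ht, g, a, haT, rfl⟩
    have heq := hls _ hA
    intro y hy
    rw [← heq] at hy
    exact hy.1
  constructor
  · -- semiprime
    intro a g ha
    have haa : mul a g a ∈ sigmaClass σ a := hidem a g
    have : sigmaClass σ a ⊆ L := key a ⟨mul a g a, ha, haa⟩
    exact this (hequiv.refl a)
  · -- right ideal
    refine ⟨hL.1, ?_⟩
    rintro c ⟨a, haL, g, b, -, rfl⟩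
    -- (aγb)γa ∈ L and σ ((aγb)γa) (aγb)
    have h1 : σ (mul (mul a g b) g a) (mul a g (mul a g b)) := hcomm (mul a g b) a g
    have h2 : mul a g (mul a g b) = mul (mul a g a) g b := (hassoc a a b g g).symm
    have h3 : σ (mul (mul a g a) g b) (mul a g b) := (hcomp _ _ b g (hidem a g)).2
    have hσw : σ (mul (mul a g b) g a) (mul a g b) :=
      hequiv.trans (h2 ▸ h1) h3
    have hwL : mul (mul a g b) g a ∈ L := hL.2 ⟨mul a g b, trivial, g, a, haL, rfl⟩
    have : sigmaClass σ (mul a g b) ⊆ L := key _ ⟨_, hwL, hσw⟩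
    exact this (hequiv.refl _)
end

section
/- Let M be a Γ-semigroup in which every left ideal is semiprime and is also a right ideal of M. Then M is left regular and xΓM ⊆ MΓx for every x ∈ M. -/
open GammaSemigroup

/-- If every left ideal is semiprime and two-sided, then M is left regular and
xΓM ⊆ MΓx for every x. -/
theorem semiprime_two_sided_left_regular {M G : Type*} [Nonempty M] [Nonempty G]
    (mul : M → G → M → M)
    (hassoc : ∀ a b c : M, ∀ g d : G, mul (mul a g b) d c = mul a g (mul b d c))
    (h : ∀ L : Set M, IsLeftIdeal mul L → IsSemiprime mul L ∧ IsRightIdeal mul L) :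
    IsLeftRegular mul ∧ ∀ x : M, sprod mul {x} Set.univ ⊆ sprod mul Set.univ {x} := by
  have hlr : IsLeftRegular mul := by
    intro x g
    have hL : IsLeftIdeal mul (sprod mul Set.univ {mul x g x}) := by
      refine ⟨⟨mul x g (mul x g x), x, trivial, g, mul x g x, rfl, rfl⟩, ?_⟩
      rintro c ⟨a, -, g1, b, ⟨a2, -, g2, b2, hb2, rfl⟩, rfl⟩
      exact ⟨mul a g1 a2, trivial, g2, b2, hb2, (hassoc ..).symm⟩
    have hsp := (h _ hL).1
    have h1 : mul (mul x g x) g (mul x g x) ∈ sprod mul Set.univ {mul x g x} :=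
      ⟨mul x g x, trivial, g, mul x g x, rfl, rfl⟩
    exact hsp x g (hsp (mul x g x) g h1)
  refine ⟨hlr, fun x => ?_⟩
  have hxMx : x ∈ sprod mul Set.univ {x} := by
    obtain ⟨g⟩ := ‹Nonempty G›
    obtain ⟨m, -, d, b, hb, heq⟩ := hlr x g
    rw [Set.mem_singleton_iff] at hb
    subst hb
    exact ⟨mul m d x, trivial, g, x, rfl, heq.trans (hassoc m x x d g).symm⟩
  have hL : IsLeftIdeal mul (Lgen mul x) := by
    refine ⟨⟨x, Or.inl rfl⟩, ?_⟩
    rintro c ⟨a, -, g1, b, hb, rfl⟩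
    rcases hb with hb | ⟨a2, -, g2, b2, hb2, rfl⟩
    · rw [Set.mem_singleton_iff] at hb
      exact Or.inr ⟨a, trivial, g1, x, rfl, by rw [hb]⟩
    · rw [Set.mem_singleton_iff] at hb2
      exact Or.inr ⟨mul a g1 a2, trivial, g2, x, rfl, by rw [hb2, hassoc]⟩
  have hR := (h _ hL).2.2
  rintro c ⟨a, ha, g1, b, -, rfl⟩
  rw [Set.mem_singleton_iff] at ha; rw [ha]
  have : mul x g1 b ∈ Lgen mul x := hR ⟨x, Or.inl rfl, g1, b, trivial, rfl⟩
  rcases this with hc | hc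
  · rw [Set.mem_singleton_iff] at hc; rw [hc]; exact hxMx
  · exact hc
end
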